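/- arXiv:2506.03891 — 8 statements merged into one kernel-verified Lean document; each statement's English description precedes it below -/
import Mathlib

section
/- Let H be a complex Hilbert space, A a positive bounded self-adjoint operator on H with ‖A‖ ≤ l, and let φ : [0, l] → ℝ be an index function on [0, l]. Then for every α with 0 < α ≤ l, the operator norm of (αI + A)^{-1/2} ∘ φ(A) is at most φ(α)/√α, where φ(A) is defined by the continuous functional calculus applied to A. -/
/-!
By uniqueness of positive square roots, `S` is `√(α + A)` in the functional calculus, so `Sinv`
is `(α + A)^{-1/2}` and `Sinv ∘ φ(A) = f(A)` with `f t = φ t / √(α + t)`; its norm is at most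
the supremum of `|f|` over `σ(A) ⊆ [0, l]`. The scalar bound `φ(t)² / (α + t) ≤ φ(α)² / α` holds
for `t ≤ α` by monotonicity of `φ`, and for `t ≥ α` because concavity of `φ²` together with
`φ(0) = 0` makes `φ(t)² / t` nonincreasing.
-/

open ContinuousLinearMap Set

theorem ConcaveOn.div_le_div_of_map_zero {s : Set ℝ} {g : ℝ → ℝ} (hg : ConcaveOn ℝ s g)
    (h0 : 0 ∈ s) (hg0 : g 0 = 0) {x y : ℝ} (hx : x ∈ s) (hy : y ∈ s) (hx0 : 0 < x)
    (hxy : x ≤ y) : g y / y ≤ g x / x := by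
  have := hg.neg.secant_mono h0 hx hy hx0.ne' (hx0.trans_le hxy).ne' hxy
  simp only [Pi.neg_apply, hg0, neg_zero, sub_zero, neg_div] at this
  linarith

theorem ConcaveOn.div_add_le_div_of_map_zero {l : ℝ} {g : ℝ → ℝ}
    (hg : ConcaveOn ℝ (Icc 0 l) g) (hg_mono : MonotoneOn g (Icc 0 l)) (hg0 : g 0 = 0)
    {α t : ℝ} (hα : 0 < α) (hαl : α ≤ l) (ht : t ∈ Icc 0 l) :
    g t / (α + t) ≤ g α / α := by
  have h0 : (0 : ℝ) ∈ Icc 0 l := ⟨le_rfl, hα.le.trans hαl⟩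
  have hαI : α ∈ Icc 0 l := ⟨hα.le, hαl⟩
  have hg_nonneg : ∀ x ∈ Icc 0 l, 0 ≤ g x := fun x hx => hg0 ▸ hg_mono h0 hx hx.1
  rcases le_total t α with htα | hαt
  · calc g t / (α + t) ≤ g α / (α + t) := by
          gcongr
          · linarith [ht.1]
          · exact hg_mono ht hαI htα
      _ ≤ g α / α := by
          gcongr
          · exact hg_nonneg α hαI
          · linarith [ht.1]
  · calc g t / (α + t) ≤ g t / t := by
          gcongr
          · exact hg_nonneg t ht
          · linarith
          · linarith
      _ ≤ g α / α := hg.div_le_div_of_map_zero h0 hg0 hαI ht hα hαt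

theorem norm_inv_sqrt_add_mul_le {l : ℝ} {φ : ℝ → ℝ} (hφ_mono : MonotoneOn φ (Icc 0 l))
    (hφ0 : φ 0 = 0) (hφ_conc : ConcaveOn ℝ (Icc 0 l) (fun t => (φ t) ^ 2))
    {α t : ℝ} (hα : 0 < α) (hαl : α ≤ l) (ht : t ∈ Icc 0 l) :
    ‖(√(α + t))⁻¹ * φ t‖ ≤ φ α / √α := by
  have h0 : (0 : ℝ) ∈ Icc 0 l := ⟨le_rfl, hα.le.trans hαl⟩
  have hφα : 0 ≤ φ α := hφ0 ▸ hφ_mono h0 ⟨hα.le, hαl⟩ hα.le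
  have hsq_mono : MonotoneOn (fun t => φ t ^ 2) (Icc 0 l) := fun x hx y hy hxy =>
    pow_le_pow_left₀ (hφ0 ▸ hφ_mono h0 hx hx.1) (hφ_mono hx hy hxy) 2
  have key := hφ_conc.div_add_le_div_of_map_zero hsq_mono (by simp [hφ0]) hα hαl ht
  calc ‖(√(α + t))⁻¹ * φ t‖ = √(φ t ^ 2 / (α + t)) := by
        rw [Real.sqrt_div' _ (by linarith [ht.1]), Real.sqrt_sq_eq_abs, Real.norm_eq_abs,
          abs_mul, abs_inv, abs_of_nonneg (Real.sqrt_nonneg _), inv_mul_eq_div]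
    _ ≤ √(φ α ^ 2 / α) := Real.sqrt_le_sqrt key
    _ = φ α / √α := by rw [Real.sqrt_div' _ hα.le, Real.sqrt_sq hφα]

section CStarAlgebra

variable {𝒜 : Type*} [CStarAlgebra 𝒜] [PartialOrder 𝒜] [StarOrderedRing 𝒜]

theorem spectrum_subset_Icc_of_nonneg_of_norm_le {a : 𝒜} {l : ℝ} (ha : 0 ≤ a) (hl : ‖a‖ ≤ l) :
    spectrum ℝ a ⊆ Icc 0 l := by
  nontriviality 𝒜
  exact fun t ht => ⟨spectrum_nonneg_of_nonneg ha ht,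
    (le_abs_self t).trans ((spectrum.norm_le_norm_of_mem ht).trans hl)⟩

theorem cfc_sqrt_const_add_mul_self {a : 𝒜} (ha : 0 ≤ a) {α : ℝ} (hα : 0 ≤ α) :
    cfc (fun t => √(α + t)) a * cfc (fun t => √(α + t)) a = algebraMap ℝ 𝒜 α + a := by
  calc _ = cfc (fun t => α + t) a := by
        rw [← cfc_mul ..]
        exact cfc_congr fun t ht =>
          Real.mul_self_sqrt (add_nonneg hα (spectrum_nonneg_of_nonneg ha ht))
    _ = algebraMap ℝ 𝒜 α + a := by rw [cfc_const_add .., cfc_id' ..]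

theorem eq_cfc_inv_sqrt_const_add {a s s' : 𝒜} {α : ℝ} (ha : 0 ≤ a) (hα : 0 < α) (hs : 0 ≤ s)
    (hss : s * s = algebraMap ℝ 𝒜 α + a) (hs's : s' * s = 1) :
    s' = cfc (fun t => (√(α + t))⁻¹) a := by
  have hsqrt_ne : ∀ t ∈ spectrum ℝ a, √(α + t) ≠ 0 := fun t ht =>
    (Real.sqrt_pos.2 (add_pos_of_pos_of_nonneg hα (spectrum_nonneg_of_nonneg ha ht))).ne'
  have hs_eq : s = cfc (fun t => √(α + t)) a :=
    (CFC.mul_self_eq_mul_self_iff _ _ hs (cfc_nonneg fun _ _ => Real.sqrt_nonneg _)).1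
      (hss.trans (cfc_sqrt_const_add_mul_self ha hα.le).symm)
  exact left_inv_eq_right_inv hs's (hs_eq ▸ (cfcUnits _ a hsqrt_ne).val_inv)

end CStarAlgebra

theorem stmt_2_general {H : Type*} [NormedAddCommGroup H] [InnerProductSpace ℂ H] [CompleteSpace H]
    (A : H →L[ℂ] H) (l : ℝ) (hA : A.IsPositive) (hAnorm : ‖A‖ ≤ l)
    (φ : ℝ → ℝ) (hφ_cont : ContinuousOn φ (Set.Icc 0 l))
    (hφ_mono : StrictMonoOn φ (Set.Icc 0 l)) (hφ0 : φ 0 = 0)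
    (hφ_conc : ConcaveOn ℝ (Set.Icc 0 l) (fun t => (φ t) ^ 2))
    (α : ℝ) (hα : 0 < α) (hαl : α ≤ l) :
    ∀ S Sinv : H →L[ℂ] H, S.IsPositive →
      S ∘L S = (α : ℂ) • (1 : H →L[ℂ] H) + A →
      Sinv ∘L S = 1 → S ∘L Sinv = 1 →
      ‖Sinv ∘L cfc φ A‖ ≤ φ α / Real.sqrt α := by
  intro S Sinv hS hSS hSinvS _
  have hA0 : 0 ≤ A := A.nonneg_iff_isPositive.2 hA
  have hspec := spectrum_subset_Icc_of_nonneg_of_norm_le hA0 hAnorm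
  have hSinv : Sinv = cfc (fun t => (√(α + t))⁻¹) A := by
    refine eq_cfc_inv_sqrt_const_add hA0 hα (S.nonneg_iff_isPositive.2 hS) ?_ hSinvS
    rwa [Algebra.algebraMap_eq_smul_one, ← Complex.coe_smul]
  have hinv_cont : ContinuousOn (fun t => (√(α + t))⁻¹) (spectrum ℝ A) :=
    ContinuousOn.inv₀ (by fun_prop) fun t ht => (Real.sqrt_pos.2 (by linarith [(hspec ht).1])).ne'
  have hφα : 0 ≤ φ α := hφ0 ▸ hφ_mono.monotoneOn ⟨le_rfl, hα.le.trans hαl⟩ ⟨hα.le, hαl⟩ hα.le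
  rw [hSinv, ← mul_def, ← cfc_mul _ _ A hinv_cont (hφ_cont.mono hspec)]
  exact norm_cfc_le (by positivity) fun t ht =>
    norm_inv_sqrt_add_mul_le hφ_mono.monotoneOn hφ0 hφ_conc hα hαl (hspec ht)

/-- Lemma 3.3, inequality (norm_forHK) of the paper: for a positive bounded
self-adjoint operator `A` on a complex Hilbert space with `‖A‖ ≤ l`, an index
function `φ` on `[0, l]` (continuous, strictly increasing, `φ 0 = 0`, with `φ²`
concave), and `0 < α ≤ l`, one has `‖(αI + A)^{-1/2} ∘ φ(A)‖ ≤ φ(α)/√α`,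
where `φ(A)` is given by the continuous functional calculus and the inverse
square root is expressed via any positive square root `S` of `αI + A` together
with its inverse `Sinv`. -/
theorem stmt_2 {H : Type*} [NormedAddCommGroup H] [InnerProductSpace ℂ H] [CompleteSpace H]
    (A : H →L[ℂ] H) (l : ℝ) (hl : 0 < l) (hA : A.IsPositive) (hAnorm : ‖A‖ ≤ l)
    (φ : ℝ → ℝ) (hφ_cont : ContinuousOn φ (Set.Icc 0 l))
    (hφ_mono : StrictMonoOn φ (Set.Icc 0 l)) (hφ0 : φ 0 = 0)
    (hφ_conc : ConcaveOn ℝ (Set.Icc 0 l) (fun t => (φ t) ^ 2))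
    (α : ℝ) (hα : 0 < α) (hαl : α ≤ l) :
    ∀ S Sinv : H →L[ℂ] H, S.IsPositive →
      S ∘L S = (α : ℂ) • (1 : H →L[ℂ] H) + A →
      Sinv ∘L S = 1 → S ∘L Sinv = 1 →
      ‖Sinv ∘L cfc φ A‖ ≤ φ α / Real.sqrt α :=
  stmt_2_general A l hA hAnorm φ hφ_cont hφ_mono hφ0 hφ_conc α hα hαl
end

section
/- Let H be a complex Hilbert space, Z a positive bounded self-adjoint operator on H, P an orthogonal projection on H, and α > 0. Then the operator αI + P Z P is invertible, and the operator norm of (αI + Z)^{1/2} ∘ P ∘ (αI + P Z P)^{-1} ∘ P ∘ (αI + Z)^{1/2} is at most 1. -/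
/-!
With `A = αI + PZP` and `B = PS`, the operator in question is `B* A⁻¹ B`. Since `P ≤ I`,
`BB* = P(αI + Z)P = αP + PZP ≤ A`, and `BB* ≤ A` conjugated by `A^{-1/2}` gives
`‖A^{-1/2}B‖ ≤ 1`, i.e. `‖B* A⁻¹ B‖ = ‖A^{-1/2}B‖² ≤ 1`.
-/

open ContinuousLinearMap CFC

theorem CStarAlgebra.norm_star_mul_inv_mul_le_one_of_mul_star_le {A : Type*} [CStarAlgebra A]
    [PartialOrder A] [StarOrderedRing A] {b : Aˣ} {c : A}
    (hcb : c * star c ≤ b) : ‖star c * ↑b⁻¹ * c‖ ≤ 1 := by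
  have hb : 0 ≤ (b : A) := (mul_star_self_nonneg c).trans hcb
  set r : A := (b : A) ^ (-(1 / 2) : ℝ)
  have hr : IsSelfAdjoint r := .of_nonneg rpow_nonneg
  have hrr : r * r = ↑b⁻¹ := by
    rw [← rpow_add b.isUnit, ← rpow_neg_one_eq_inv b hb]
    norm_num
  have hconj : (r * c) * star (r * c) ≤ 1 :=
    calc (r * c) * star (r * c) = r * (c * star c) * r := by
          rw [star_mul, hr.star_eq]; noncomm_ring
      _ ≤ r * b * r := hr.conjugate_le_conjugate hcb
      _ = 1 := conjugate_rpow_neg_one_half (b : A)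
  have hnorm : ‖r * c‖ * ‖r * c‖ ≤ 1 := by
    rw [← CStarRing.norm_self_mul_star]
    exact (CStarAlgebra.norm_le_one_iff_of_nonneg _ (mul_star_self_nonneg _)).2 hconj
  calc ‖star c * ↑b⁻¹ * c‖ = ‖star (r * c) * (r * c)‖ := by
        rw [star_mul, hr.star_eq, ← hrr]; noncomm_ring
    _ ≤ 1 := by rwa [CStarRing.norm_star_mul_self]

/-- Lemma 3.4, inequality (eq:prob2) of the paper: for a positive bounded
self-adjoint operator `Z` on a complex Hilbert space, an orthogonal projection
`P` (self-adjoint idempotent), and `α > 0`, the operator `αI + P Z P` is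
invertible and `‖(αI + Z)^{1/2} ∘ P ∘ (αI + P Z P)^{-1} ∘ P ∘ (αI + Z)^{1/2}‖ ≤ 1`,
where the square root is expressed via any positive square root `S` of `αI + Z`
and the inverse via any two-sided inverse `Q` of `αI + P Z P`. -/
theorem stmt_5 {H : Type*} [NormedAddCommGroup H] [InnerProductSpace ℂ H] [CompleteSpace H]
    (Z : H →L[ℂ] H) (hZ : Z.IsPositive)
    (P : H →L[ℂ] H) (hP_sa : IsSelfAdjoint P) (hP_idem : P ∘L P = P)
    (α : ℝ) (hα : 0 < α) :
    IsUnit ((α : ℂ) • (1 : H →L[ℂ] H) + P ∘L Z ∘L P) ∧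
    ∀ S : H →L[ℂ] H, S.IsPositive →
      S ∘L S = (α : ℂ) • (1 : H →L[ℂ] H) + Z →
      ∀ Q : H →L[ℂ] H,
        Q ∘L ((α : ℂ) • (1 : H →L[ℂ] H) + P ∘L Z ∘L P) = 1 →
        ((α : ℂ) • (1 : H →L[ℂ] H) + P ∘L Z ∘L P) ∘L Q = 1 →
        ‖S ∘L P ∘L Q ∘L P ∘L S‖ ≤ 1 := by
  have hP : IsStarProjection P := ⟨hP_idem, hP_sa⟩
  have hPZP : 0 ≤ P * Z * P := hP_sa.conjugate_nonneg ((nonneg_iff_isPositive Z).2 hZ)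
  have hα1 : IsStrictlyPositive ((α : ℂ) • (1 : H →L[ℂ] H)) := by
    simpa [Algebra.algebraMap_eq_smul_one] using isStrictlyPositive_algebraMap (A := H →L[ℂ] H) hα
  refine ⟨(hα1.add_nonneg hPZP).isUnit, fun S hS hSS Q hQA hAQ => ?_⟩
  let A : (H →L[ℂ] H)ˣ := ⟨_, Q, hAQ, hQA⟩
  have hle : (P * S) * star (P * S) ≤ A :=
    calc (P * S) * star (P * S) = (α : ℂ) • P + P * Z * P := by
          rw [star_mul, hS.isSelfAdjoint.star_eq, hP_sa.star_eq,
            show P * S * (S * P) = P * (S * S) * P by noncomm_ring, show S * S = _ from hSS]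
          simp only [mul_add, add_mul, mul_smul_comm, smul_mul_assoc, mul_one,
            hP.isIdempotentElem.eq]
      _ ≤ (α : ℂ) • 1 + P * Z * P := by
          gcongr
          simpa only [Complex.coe_smul] using smul_le_smul_of_nonneg_left hP.le_one hα.le
  have := CStarAlgebra.norm_star_mul_inv_mul_le_one_of_mul_star_le hle
  rwa [star_mul, hS.isSelfAdjoint.star_eq, hP_sa.star_eq] at this
end

section
/- Let H be a complex Hilbert space, Z a positive bounded self-adjoint operator on H, P an orthogonal projection on H, and α > 0. Then the operator αI + P Z P is invertible, and the operator norm of (αI + Z)^{1/2} ∘ (αI + P Z P)^{-1} ∘ P ∘ (αI + Z)^{1/2} is at most 1. -/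
/-!
Write `B = αI + PZP` and `T = S Q P S` with `S² = αI + Z`, `Q = B⁻¹`. Since `P` commutes with `B`,
it commutes with `Q`, and `P S² P = P B`; hence `T² = S Q (P S² P) Q S = S Q P B Q S = T`.
Being also self-adjoint, `T` is an orthogonal projection, so `‖T‖ ≤ 1` by the C⋆-identity.
Invertibility of `B` holds because it is strictly positive.
-/

open ContinuousLinearMap

section Monoid

variable {M : Type*} [Monoid M] {S P B Q : M}

theorem isIdempotentElem_mul_inverse_mul
    (hPB : P * (S * S) * P = P * B) (hBP : Commute B P) (hQB : Q * B = 1) (hBQ : B * Q = 1) :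
    IsIdempotentElem (S * Q * P * S) := by
  have hQP : Commute Q P := Commute.units_inv_left (u := ⟨B, Q, hBQ, hQB⟩) hBP
  have hQPBQ : Q * (P * B) * Q = Q * P := by
    rw [← hBP.eq, ← mul_assoc, hQB, one_mul, hQP.eq]
  calc S * Q * P * S * (S * Q * P * S) = S * Q * (P * (S * S) * (Q * P)) * S := by
        simp only [mul_assoc]
    _ = S * (Q * (P * (S * S) * P) * Q) * S := by rw [hQP.eq]; simp only [mul_assoc]
    _ = S * Q * P * S := by rw [hPB, hQPBQ]; simp only [mul_assoc]

end Monoid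

section StarMonoid

variable {M : Type*} [Monoid M] [StarMul M] {S P B Q : M}

theorem IsSelfAdjoint.of_mul_eq_one (hB : IsSelfAdjoint B) (hBQ : B * Q = 1) :
    IsSelfAdjoint Q :=
  left_inv_eq_right_inv (by rw [← hB.star_eq, ← star_mul, hBQ, star_one]) hBQ

theorem isStarProjection_mul_inverse_mul (hS : IsSelfAdjoint S) (hP : IsSelfAdjoint P)
    (hB : IsSelfAdjoint B)
    (hPB : P * (S * S) * P = P * B) (hBP : Commute B P) (hQB : Q * B = 1) (hBQ : B * Q = 1) :
    IsStarProjection (S * Q * P * S) := by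
  refine ⟨isIdempotentElem_mul_inverse_mul hPB hBP hQB hBQ, ?_⟩
  have hQP : Commute Q P := Commute.units_inv_left (u := ⟨B, Q, hBQ, hQB⟩) hBP
  rw [IsSelfAdjoint, star_mul, star_mul, star_mul, hS.star_eq, hP.star_eq,
    (hB.of_mul_eq_one hBQ).star_eq, mul_assoc S Q, hQP.eq]
  simp only [mul_assoc]

end StarMonoid

/-- Lemma 3.4, inequality (eq:prob20) of the paper: for a positive bounded
self-adjoint operator `Z` on a complex Hilbert space, an orthogonal projection
`P` (self-adjoint idempotent), and `α > 0`, the operator `αI + P Z P` is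
invertible and `‖(αI + Z)^{1/2} ∘ (αI + P Z P)^{-1} ∘ P ∘ (αI + Z)^{1/2}‖ ≤ 1`,
where the square root is expressed via any positive square root `S` of `αI + Z`
and the inverse via any two-sided inverse `Q` of `αI + P Z P`. -/
theorem stmt_6 {H : Type*} [NormedAddCommGroup H] [InnerProductSpace ℂ H] [CompleteSpace H]
    (Z : H →L[ℂ] H) (hZ : Z.IsPositive)
    (P : H →L[ℂ] H) (hP_sa : IsSelfAdjoint P) (hP_idem : P ∘L P = P)
    (α : ℝ) (hα : 0 < α) :
    IsUnit ((α : ℂ) • (1 : H →L[ℂ] H) + P ∘L Z ∘L P) ∧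
    ∀ S : H →L[ℂ] H, S.IsPositive →
      S ∘L S = (α : ℂ) • (1 : H →L[ℂ] H) + Z →
      ∀ Q : H →L[ℂ] H,
        Q ∘L ((α : ℂ) • (1 : H →L[ℂ] H) + P ∘L Z ∘L P) = 1 →
        ((α : ℂ) • (1 : H →L[ℂ] H) + P ∘L Z ∘L P) ∘L Q = 1 →
        ‖S ∘L Q ∘L P ∘L S‖ ≤ 1 := by
  have hP : IsIdempotentElem P := hP_idem
  have hα_smul : (α : ℂ) • (1 : H →L[ℂ] H) = algebraMap ℝ _ α := by
    rw [Algebra.algebraMap_eq_smul_one, Complex.coe_smul]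
  have hB : IsStrictlyPositive ((α : ℂ) • (1 : H →L[ℂ] H) + P * Z * P) := by
    rw [hα_smul]
    exact (isStrictlyPositive_algebraMap hα).add_nonneg
      (hP_sa.conjugate_nonneg ((nonneg_iff_isPositive Z).mpr hZ))
  refine ⟨hB.isUnit, fun S hS hSS Q hQB hBQ => ?_⟩
  have hPB : P * (S * S) * P = P * ((α : ℂ) • 1 + P * Z * P) := by
    rw [show S * S = _ from hSS]
    simp only [mul_add, add_mul, mul_smul_comm, smul_mul_assoc, mul_one, ← mul_assoc, hP.eq]
  have hBP : Commute ((α : ℂ) • 1 + P * Z * P) P :=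
    ((Commute.one_left P).smul_left _).add_left <| by
      rw [Commute, SemiconjBy, mul_assoc, hP.eq, ← mul_assoc, ← mul_assoc, hP.eq]
  exact IsStarProjection.norm_le _ <| isStarProjection_mul_inverse_mul hS.isSelfAdjoint hP_sa
    hB.nonneg.isSelfAdjoint hPB hBP hQB hBQ
end

section
/- Let H and K be complex Hilbert spaces, T : H → K a bounded linear operator, P an orthogonal projection on H, and α > 0. Then αI + T P T* is invertible and the operator norm of (αI + T P T*)^{-1} ∘ (αI + T T*) on K is at most 1 + α^{-1} ‖T ∘ (I − P)‖². -/
/-!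
Write `A = αI + T P T*` and `B = T (I - P)`. Since `P` and `I - P` are orthogonal projections,
`T P T*` is positive and `T (I - P) T* = B B*`, so `αI + T T* = A + B B*`. Positivity gives
`re ⟪A x, x⟫ ≥ α ‖x‖²`, hence `A` is bounded below by `α`: it is invertible (Lax–Milgram) and
its inverse has norm at most `α⁻¹`. Therefore `A⁻¹ (αI + T T*) = I + A⁻¹ B B*` has norm at most
`1 + α⁻¹ ‖B‖²`.
-/

open ContinuousLinearMap

open scoped InnerProductSpace InnerProduct NNReal

namespace ContinuousLinearMap

theorem opNorm_le_of_antilipschitz_of_comp_eq_one {𝕜 E F : Type*} [NontriviallyNormedField 𝕜]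
    [SeminormedAddCommGroup E] [NormedSpace 𝕜 E] [SeminormedAddCommGroup F] [NormedSpace 𝕜 F]
    {f : E →L[𝕜] F} {g : F →L[𝕜] E} {K : ℝ≥0} (hf : AntilipschitzWith K f) (hfg : f ∘L g = 1) :
    ‖g‖ ≤ K :=
  opNorm_le_bound g K.coe_nonneg fun y => by
    simpa [← comp_apply, hfg] using bound_of_antilipschitz f hf (g y)

variable {𝕜 E F : Type*} [RCLike 𝕜] [NormedAddCommGroup E] [InnerProductSpace 𝕜 E]

theorem IsPositive.le_norm_inner_smul_one_add {S : E →L[𝕜] E} (hS : S.IsPositive) (c : ℝ)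
    (x : E) : ‖x‖ ^ 2 * c ≤ ‖⟪((c : 𝕜) • (1 : E →L[𝕜] E) + S) x, x⟫_𝕜‖ :=
  calc ‖x‖ ^ 2 * c = RCLike.re ⟪((c : 𝕜) • (1 : E →L[𝕜] E)) x, x⟫_𝕜 := by
        simp [inner_smul_left, mul_comm]
    _ ≤ RCLike.re ⟪((c : 𝕜) • (1 : E →L[𝕜] E) + S) x, x⟫_𝕜 := by
        simpa [inner_add_left] using hS.re_inner_nonneg_left x
    _ ≤ ‖⟪((c : 𝕜) • (1 : E →L[𝕜] E) + S) x, x⟫_𝕜‖ := RCLike.re_le_norm _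

variable [NormedAddCommGroup F] [InnerProductSpace 𝕜 F] [CompleteSpace E] [CompleteSpace F]

theorem comp_starProjection_comp_adjoint {P : E →L[𝕜] E} (hP : IsStarProjection P)
    (T : E →L[𝕜] F) : T ∘L P ∘L T† = (T ∘L P) ∘L (T ∘L P)† := by
  rw [adjoint_comp, hP.isSelfAdjoint.adjoint_eq, comp_assoc, ← comp_assoc P P,
    ← mul_def, hP.isIdempotentElem.eq]

theorem comp_adjoint_eq_add_of_isStarProjection {P : E →L[𝕜] E} (hP : IsStarProjection P)
    (T : E →L[𝕜] F) :
    T ∘L T† = T ∘L P ∘L T† + (T ∘L (1 - P)) ∘L (T ∘L (1 - P))† := by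
  rw [← comp_starProjection_comp_adjoint hP.one_sub, ← comp_add, ← add_comp, add_sub_cancel,
    one_def, id_comp]

end ContinuousLinearMap

/-- The deterministic form of the bound (b_add_err) from Appendix B of the
paper: for a bounded operator `T : H → K` between complex Hilbert spaces, an
orthogonal projection `P` on `H`, and `α > 0`, the operator `αI + T P T*` is
invertible and `‖(αI + T P T*)^{-1} ∘ (αI + T T*)‖ ≤ 1 + α⁻¹ ‖T ∘ (I − P)‖²`,
where the inverse is expressed via any two-sided inverse `Q` of `αI + T P T*`. -/
theorem stmt_9 {H K : Type*} [NormedAddCommGroup H] [InnerProductSpace ℂ H] [CompleteSpace H]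
    [NormedAddCommGroup K] [InnerProductSpace ℂ K] [CompleteSpace K]
    (T : H →L[ℂ] K) (P : H →L[ℂ] H) (hP_sa : IsSelfAdjoint P) (hP_idem : P ∘L P = P)
    (α : ℝ) (hα : 0 < α) :
    IsUnit ((α : ℂ) • (1 : K →L[ℂ] K) + T ∘L P ∘L ContinuousLinearMap.adjoint T) ∧
    ∀ Q : K →L[ℂ] K,
      Q ∘L ((α : ℂ) • (1 : K →L[ℂ] K) + T ∘L P ∘L ContinuousLinearMap.adjoint T) = 1 →
      ((α : ℂ) • (1 : K →L[ℂ] K) + T ∘L P ∘L ContinuousLinearMap.adjoint T) ∘L Q = 1 →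
      ‖Q ∘L ((α : ℂ) • (1 : K →L[ℂ] K) + T ∘L ContinuousLinearMap.adjoint T)‖ ≤
        1 + α⁻¹ * ‖T ∘L ((1 : H →L[ℂ] H) - P)‖ ^ 2 := by
  have hP : IsStarProjection P := ⟨hP_idem, hP_sa⟩
  have hcoercive : ∀ x, ‖x‖ ^ 2 * α ≤ ‖⟪((α : ℂ) • (1 : K →L[ℂ] K) + T ∘L P ∘L T†) x, x⟫_ℂ‖ :=
    ((IsPositive.of_isStarProjection hP).conj_adjoint T).le_norm_inner_smul_one_add α
  have hα' : (0 : ℝ≥0) < ⟨α, hα.le⟩ := hα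
  refine ⟨isUnit_of_forall_le_norm_inner_map _ hα' hcoercive, fun Q hQA hAQ => ?_⟩
  have hQ : ‖Q‖ ≤ α⁻¹ := by
    have hanti := antilipschitz_of_forall_le_inner_map _ hα' hcoercive
    exact (opNorm_le_of_antilipschitz_of_comp_eq_one hanti hAQ).trans_eq (NNReal.coe_inv _)
  set B := T ∘L (1 - P)
  calc ‖Q ∘L ((α : ℂ) • 1 + T ∘L T†)‖
      = ‖1 + Q ∘L B ∘L B†‖ := by
        rw [comp_adjoint_eq_add_of_isStarProjection hP, ← add_assoc, comp_add, hQA]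
    _ ≤ 1 + ‖Q‖ * (‖B‖ * ‖B†‖) :=
        (norm_add_le _ _).trans (add_le_add norm_id_le
          ((opNorm_comp_le _ _).trans (by gcongr; exact opNorm_comp_le _ _)))
    _ ≤ 1 + α⁻¹ * ‖B‖ ^ 2 := by
        rw [LinearIsometryEquiv.norm_map, ← sq]
        gcongr
end

section
/- Let l > 0, p > 0, and for every α > 0 let g_α : (0, l] → ℝ be given, together with constants γ₀ ≥ 0 and γ_p ≥ 0 such that for all α > 0 and all t ∈ (0, l]: |1 − t·g_α(t)| ≤ γ₀ and t^p·|1 − t·g_α(t)| ≤ γ_p·α^p. Let φ : (0, l] → ℝ be a positive, nondecreasing function such that t ↦ t^p/φ(t) is nondecreasing on (0, l]. Then for every α ∈ (0, l] and every t ∈ (0, l]: |1 − t·g_α(t)|·φ(t) ≤ max(γ₀, γ_p)·φ(α). -/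
/-! For `t ≤ α` the bound follows from `|1 - t g_α(t)| ≤ γ₀` and the monotonicity of `φ`.
For `α ≤ t` the qualification gives `|1 - t g_α(t)| ≤ γ_p (α/t)^p`, and the covering condition
`α^p / φ(α) ≤ t^p / φ(t)` turns the factor `(α/t)^p φ(t)` into at most `φ(α)`. -/

lemma mul_le_mul_of_mul_le_of_div_le_div {a b u v r γ : ℝ} (ha : 0 < a) (hb : 0 < b)
    (hu : 0 < u) (hv : 0 < v) (hr : 0 ≤ r) (hqual : b * r ≤ γ * a)
    (hcover : a / u ≤ b / v) : r * v ≤ γ * u := by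
  have hγ : 0 ≤ γ := nonneg_of_mul_nonneg_left ((mul_nonneg hb.le hr).trans hqual) ha
  have hav : a * v ≤ b * u := (div_le_div_iff₀ hu hv).mp hcover
  refine le_of_mul_le_mul_left ?_ hb
  calc b * (r * v) = b * r * v := by ring
    _ ≤ γ * a * v := mul_le_mul_of_nonneg_right hqual hv.le
    _ = γ * (a * v) := by ring
    _ ≤ γ * (b * u) := mul_le_mul_of_nonneg_left hav hγ
    _ = b * (γ * u) := by ring

theorem stmt_11_general (l p : ℝ)
    (g : ℝ → ℝ → ℝ) (γ₀ γp : ℝ)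
    (hbound : ∀ α > (0 : ℝ), ∀ t ∈ Set.Ioc (0 : ℝ) l, |1 - t * g α t| ≤ γ₀)
    (hqual : ∀ α > (0 : ℝ), ∀ t ∈ Set.Ioc (0 : ℝ) l, t ^ p * |1 - t * g α t| ≤ γp * α ^ p)
    (φ : ℝ → ℝ)
    (hφ_pos : ∀ t ∈ Set.Ioc (0 : ℝ) l, 0 < φ t)
    (hφ_mono : MonotoneOn φ (Set.Ioc 0 l))
    (hcover : MonotoneOn (fun t => t ^ p / φ t) (Set.Ioc 0 l))
    (α : ℝ) (hα : α ∈ Set.Ioc (0 : ℝ) l) (t : ℝ) (ht : t ∈ Set.Ioc (0 : ℝ) l) :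
    |1 - t * g α t| * φ t ≤ max γ₀ γp * φ α := by
  have hφα : 0 ≤ φ α := (hφ_pos α hα).le
  rcases le_total t α with htα | hαt
  · have hb := hbound α hα.1 t ht
    calc |1 - t * g α t| * φ t ≤ γ₀ * φ α :=
          mul_le_mul hb (hφ_mono ht hα htα) (hφ_pos t ht).le ((abs_nonneg _).trans hb)
      _ ≤ max γ₀ γp * φ α := mul_le_mul_of_nonneg_right (le_max_left _ _) hφα
  · calc |1 - t * g α t| * φ t ≤ γp * φ α :=
          mul_le_mul_of_mul_le_of_div_le_div (Real.rpow_pos_of_pos hα.1 p)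
            (Real.rpow_pos_of_pos ht.1 p) (hφ_pos α hα) (hφ_pos t ht) (abs_nonneg _)
            (hqual α hα.1 t ht) (hcover hα ht hαt)
      _ ≤ max γ₀ γp * φ α := mul_le_mul_of_nonneg_right (le_max_right _ _) hφα

/-- Proposition 3.1 (cover) of the paper: if the regularization family `g_α`
satisfies `|1 − t g_α(t)| ≤ γ₀` and has qualification `p` with constant `γ_p`
(i.e. `t^p |1 − t g_α(t)| ≤ γ_p α^p`), and the qualification `p` covers the
index function `φ` (i.e. `t ↦ t^p/φ(t)` is nondecreasing on `(0, l]`, with `φ`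
positive and nondecreasing there), then for all `α, t ∈ (0, l]`:
`|1 − t g_α(t)| φ(t) ≤ max(γ₀, γ_p) φ(α)`. -/
theorem stmt_11 (l p : ℝ) (hl : 0 < l) (hp : 0 < p)
    (g : ℝ → ℝ → ℝ) (γ₀ γp : ℝ) (hγ₀ : 0 ≤ γ₀) (hγp : 0 ≤ γp)
    (hbound : ∀ α > (0 : ℝ), ∀ t ∈ Set.Ioc (0 : ℝ) l, |1 - t * g α t| ≤ γ₀)
    (hqual : ∀ α > (0 : ℝ), ∀ t ∈ Set.Ioc (0 : ℝ) l, t ^ p * |1 - t * g α t| ≤ γp * α ^ p)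
    (φ : ℝ → ℝ)
    (hφ_pos : ∀ t ∈ Set.Ioc (0 : ℝ) l, 0 < φ t)
    (hφ_mono : MonotoneOn φ (Set.Ioc 0 l))
    (hcover : MonotoneOn (fun t => t ^ p / φ t) (Set.Ioc 0 l))
    (α : ℝ) (hα : α ∈ Set.Ioc (0 : ℝ) l) (t : ℝ) (ht : t ∈ Set.Ioc (0 : ℝ) l) :
    |1 - t * g α t| * φ t ≤ max γ₀ γp * φ α :=
  stmt_11_general l p g γ₀ γp hbound hqual φ hφ_pos hφ_mono hcover α hα t ht
end

section
/- Let l > 0 and let φ : [0, l] → ℝ be a nonnegative, nondecreasing function with φ(0) = 0 such that φ² is concave on [0, l]. Then for every α ∈ (0, l] and every t ∈ (0, l]: (α/(t + α))·φ(t) ≤ φ(α). -/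
/-!
The Tikhonov residual `α/(t + α)` is at most `1`, which settles `t ≤ α` by monotonicity of `φ`.
For `α < t` one compares squares: concavity of `φ²` with `φ²(0) = 0` makes `φ(t)²/t` antitone,
so `φ(t)² ≤ (t/α) φ(α)²`, while `(α/(t + α))² ≤ α/t`.
-/

lemma ConcaveOn.antitoneOn_div {𝕜 : Type*} [Field 𝕜] [LinearOrder 𝕜] [IsStrictOrderedRing 𝕜]
    {s : Set 𝕜} {f : 𝕜 → 𝕜} (hf : ConcaveOn 𝕜 s f) (h0 : 0 ∈ s) (hf0 : f 0 = 0) :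
    AntitoneOn (fun x => f x / x) {x ∈ s | 0 < x} := by
  have hslope : slope f 0 = fun x => f x / x := by
    ext x
    rw [slope_def_field, hf0, sub_zero, sub_zero]
  exact hslope ▸ hf.antitoneOn_slope_gt h0

lemma div_add_sq_le_div {𝕜 : Type*} [Field 𝕜] [LinearOrder 𝕜] [IsStrictOrderedRing 𝕜]
    {a t : 𝕜} (ha : 0 ≤ a) (ht : 0 < t) : (a / (t + a)) ^ 2 ≤ a / t := by
  rw [div_pow, div_le_div_iff₀ (by positivity) ht]
  nlinarith [mul_nonneg ha (sq_nonneg t), mul_nonneg (sq_nonneg a) ht.le, pow_nonneg ha 3]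

theorem stmt_12_general (l : ℝ) (φ : ℝ → ℝ)
    (hφ_mono : MonotoneOn φ (Set.Icc 0 l))
    (hφ0 : φ 0 = 0)
    (hφ_conc : ConcaveOn ℝ (Set.Icc 0 l) (fun t => (φ t) ^ 2))
    (α : ℝ) (hα : α ∈ Set.Ioc (0 : ℝ) l) (t : ℝ) (ht : t ∈ Set.Ioc (0 : ℝ) l) :
    (α / (t + α)) * φ t ≤ φ α := by
  obtain ⟨hα0, hαl⟩ := hα
  obtain ⟨ht0, htl⟩ := ht
  have hα_mem : α ∈ Set.Icc 0 l := ⟨hα0.le, hαl⟩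
  have ht_mem : t ∈ Set.Icc 0 l := ⟨ht0.le, htl⟩
  have h0_mem : (0 : ℝ) ∈ Set.Icc 0 l := ⟨le_rfl, hα0.le.trans hαl⟩
  have hφt : 0 ≤ φ t := hφ0 ▸ hφ_mono h0_mem ht_mem ht0.le
  have hφα : 0 ≤ φ α := hφ0 ▸ hφ_mono h0_mem hα_mem hα0.le
  rcases le_or_gt t α with htα | hαt
  · have hres : α / (t + α) ≤ 1 := (div_le_one (by linarith)).2 (by linarith)
    calc α / (t + α) * φ t ≤ φ t := mul_le_of_le_one_left hφt hres
      _ ≤ φ α := hφ_mono ht_mem hα_mem htα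
  · have hslope : φ t ^ 2 / t ≤ φ α ^ 2 / α :=
      hφ_conc.antitoneOn_div h0_mem (by simp [hφ0]) ⟨hα_mem, hα0⟩ ⟨ht_mem, ht0⟩ hαt.le
    refine le_of_sq_le_sq ?_ hφα
    calc (α / (t + α) * φ t) ^ 2 = (α / (t + α)) ^ 2 * φ t ^ 2 := mul_pow _ _ _
      _ ≤ α / t * φ t ^ 2 := by gcongr; exact div_add_sq_le_div hα0.le ht0
      _ = α * (φ t ^ 2 / t) := by ring
      _ ≤ α * (φ α ^ 2 / α) := by gcongr
      _ = φ α ^ 2 := by field_simp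

/-- Relation (cond_qualific) for the standard Tikhonov method: if
`φ : [0, l] → ℝ` is nonnegative, nondecreasing, vanishes at `0`, and `φ²` is
concave on `[0, l]`, then for all `α, t ∈ (0, l]`:
`(α/(t + α)) φ(t) ≤ φ(α)`. -/
theorem stmt_12 (l : ℝ) (hl : 0 < l) (φ : ℝ → ℝ)
    (hφ_nonneg : ∀ t ∈ Set.Icc (0 : ℝ) l, 0 ≤ φ t)
    (hφ_mono : MonotoneOn φ (Set.Icc 0 l))
    (hφ0 : φ 0 = 0)
    (hφ_conc : ConcaveOn ℝ (Set.Icc 0 l) (fun t => (φ t) ^ 2))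
    (α : ℝ) (hα : α ∈ Set.Ioc (0 : ℝ) l) (t : ℝ) (ht : t ∈ Set.Ioc (0 : ℝ) l) :
    (α / (t + α)) * φ t ≤ φ α :=
  stmt_12_general l φ hφ_mono hφ0 hφ_conc α hα t ht
end

section
/- Let l > 0 and let φ : [0, l] → ℝ be a nonnegative, nondecreasing function with φ(0) = 0 such that φ² is concave on [0, l]. Then for every α ∈ (0, l] and every t ∈ (0, l]: (α/(t + α))·√t·φ(t) ≤ √α·φ(α). -/
/-!
For `α < t`, concavity of `φ²` with `φ(0) = 0` makes `φ(t)²/t` nonincreasing, so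
`φ(t)² ≤ (t/α) φ(α)²`; combined with `t/(t + α) ≤ 1` this gives the bound. For `t ≤ α`,
monotonicity gives `φ(t) ≤ φ(α)`, and AM-GM `2√(αt) ≤ t + α` gives `α√t/(t + α) ≤ √α`.
-/

open Set Real

theorem ConcaveOn.div_le_div_of_map_zero_s13 {𝕜 : Type*} [Field 𝕜] [LinearOrder 𝕜]
    [IsStrictOrderedRing 𝕜] {s : Set 𝕜} {g : 𝕜 → 𝕜} (hg : ConcaveOn 𝕜 s g) (h0 : 0 ∈ s)
    (hg0 : g 0 = 0) {a t : 𝕜} (ha : a ∈ s) (ht : t ∈ s) (ha0 : 0 < a) (hat : a ≤ t) :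
    g t / t ≤ g a / a := by
  simpa [slope_def_field, hg0] using
    hg.antitoneOn_slope_gt h0 ⟨ha, ha0⟩ ⟨ht, ha0.trans_le hat⟩ hat

theorem div_add_mul_sqrt_le_sqrt {a t : ℝ} (ha : 0 ≤ a) (ht : 0 ≤ t) :
    a / (t + a) * √t ≤ √a := by
  rcases ha.eq_or_lt with rfl | ha
  · simp
  have amgm : 2 * √a * √t ≤ t + a := by
    nlinarith [sq_nonneg (√a - √t), sq_sqrt ha.le, sq_sqrt ht]
  rw [div_mul_eq_mul_div, div_le_iff₀ (by positivity)]
  nlinarith [sq_sqrt ha.le, sqrt_nonneg a, sqrt_nonneg t]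

theorem div_add_mul_sqrt_mul_le_of_sq_div_le {a t x y : ℝ} (ha : 0 < a) (hat : a ≤ t)
    (hx : 0 ≤ x) (hy : 0 ≤ y) (h : x ^ 2 / t ≤ y ^ 2 / a) :
    a / (t + a) * √t * x ≤ √a * y := by
  have ht : 0 < t := ha.trans_le hat
  rw [← pow_le_pow_iff_left₀ (by positivity) (by positivity) two_ne_zero, mul_pow, mul_pow,
    mul_pow, sq_sqrt ht.le, sq_sqrt ha.le, div_pow]
  rw [div_le_div_iff₀ ht ha] at h
  rw [div_mul_eq_mul_div, div_mul_eq_mul_div, div_le_iff₀ (by positivity)]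
  calc a ^ 2 * t * x ^ 2 = a * t * (x ^ 2 * a) := by ring
    _ ≤ a * t * (y ^ 2 * t) := by gcongr
    _ = a * y ^ 2 * t ^ 2 := by ring
    _ ≤ a * y ^ 2 * (t + a) ^ 2 := by gcongr; linarith

theorem stmt_13_general (l : ℝ) (φ : ℝ → ℝ)
    (hφ_mono : MonotoneOn φ (Set.Icc 0 l))
    (hφ0 : φ 0 = 0)
    (hφ_conc : ConcaveOn ℝ (Set.Icc 0 l) (fun t => (φ t) ^ 2))
    (α : ℝ) (hα : α ∈ Set.Ioc (0 : ℝ) l) (t : ℝ) (ht : t ∈ Set.Ioc (0 : ℝ) l) :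
    (α / (t + α)) * Real.sqrt t * φ t ≤ Real.sqrt α * φ α := by
  have hα' : α ∈ Icc 0 l := Ioc_subset_Icc_self hα
  have ht' : t ∈ Icc 0 l := Ioc_subset_Icc_self ht
  have h0 : (0 : ℝ) ∈ Icc 0 l := ⟨le_rfl, hα'.1.trans hα'.2⟩
  have hφ_nonneg : ∀ x ∈ Icc 0 l, 0 ≤ φ x := fun x hx => hφ0 ▸ hφ_mono h0 hx hx.1
  rcases le_total t α with htα | hαt
  · have hφt := hφ_nonneg t ht'
    calc α / (t + α) * √t * φ t ≤ √α * φ t := by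
          gcongr; exact div_add_mul_sqrt_le_sqrt hα'.1 ht'.1
      _ ≤ √α * φ α := by gcongr; exact hφ_mono ht' hα' htα
  · refine div_add_mul_sqrt_mul_le_of_sq_div_le hα.1 hαt (hφ_nonneg t ht') (hφ_nonneg α hα') ?_
    exact hφ_conc.div_le_div_of_map_zero_s13 h0 (by simp [hφ0]) hα' ht' hα.1 hαt

/-- Relation (qualific_root) for the standard Tikhonov method (with constant
`γ_* = 1`): if `φ : [0, l] → ℝ` is nonnegative, nondecreasing, vanishes at `0`,
and `φ²` is concave on `[0, l]`, then for all `α, t ∈ (0, l]`: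
`(α/(t + α)) √t φ(t) ≤ √α φ(α)`. -/
theorem stmt_13 (l : ℝ) (hl : 0 < l) (φ : ℝ → ℝ)
    (hφ_nonneg : ∀ t ∈ Set.Icc (0 : ℝ) l, 0 ≤ φ t)
    (hφ_mono : MonotoneOn φ (Set.Icc 0 l))
    (hφ0 : φ 0 = 0)
    (hφ_conc : ConcaveOn ℝ (Set.Icc 0 l) (fun t => (φ t) ^ 2))
    (α : ℝ) (hα : α ∈ Set.Ioc (0 : ℝ) l) (t : ℝ) (ht : t ∈ Set.Ioc (0 : ℝ) l) :
    (α / (t + α)) * Real.sqrt t * φ t ≤ Real.sqrt α * φ α :=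
  stmt_13_general l φ hφ_mono hφ0 hφ_conc α hα t ht
end

section
/- Let H be a complex Hilbert space and let A and B be positive bounded self-adjoint operators on H. Then for every s with 0 ≤ s ≤ 1, the operator norm satisfies ‖A^s ∘ B^s‖ ≤ ‖A ∘ B‖^s, where A^s and B^s are defined by the continuous functional calculus (real powers of positive operators). -/
/-!
Let `f s = ‖a^s b^s‖` and `m = (s + t) / 2`. The C⋆-identity and the invariance of the spectral
radius `r` under cyclic permutations give
`f m ^ 2 = r(b^m a^s a^t b^m) = r((a^t b^t)(b^s a^s)) ≤ f t * f s`,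
so `f` is midpoint log-convex on `[0, 1]`. As `f 0 ≤ 1`, induction gives `f s ≤ f 1 ^ s` at
dyadic `s`, and continuity of `s ↦ a^s` for `s > 0` extends this to all of `[0, 1]`.
-/

open Filter Set Topology
open scoped ENNReal

theorem apply_dyadic_le_rpow_of_sq_midpoint_le {f : ℝ → ℝ} (hf : 0 ≤ f) (h0 : f 0 ≤ 1)
    (hmid : ∀ s ∈ Icc (0 : ℝ) 1, ∀ t ∈ Icc (0 : ℝ) 1, f ((s + t) / 2) ^ 2 ≤ f s * f t)
    (n k : ℕ) (hk : k ≤ 2 ^ n) : f (k / 2 ^ n) ≤ f 1 ^ ((k : ℝ) / 2 ^ n) := by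
  induction n generalizing k with
  | zero =>
    interval_cases k <;> simp [h0]
  | succ n ih =>
    have hIcc (j : ℕ) (hj : j ≤ 2 ^ n) : (j : ℝ) / 2 ^ n ∈ Icc (0 : ℝ) 1 :=
      ⟨by positivity, div_le_one_of_le₀ (by exact_mod_cast hj) (by positivity)⟩
    have hsplit : (k : ℝ) / 2 ^ (n + 1) =
        (((k + 1) / 2 : ℕ) / 2 ^ n + ((k / 2 : ℕ) : ℝ) / 2 ^ n) / 2 := by
      rw [← add_div, ← Nat.cast_add, show (k + 1) / 2 + k / 2 = k by omega, pow_succ]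
      ring
    rw [hsplit]
    refine le_of_pow_le_pow_left₀ two_ne_zero (Real.rpow_nonneg (hf 1) _) ?_
    calc f _ ^ 2 ≤ f (((k + 1) / 2 : ℕ) / 2 ^ n) * f (((k / 2 : ℕ) : ℝ) / 2 ^ n) :=
          hmid _ (hIcc _ (by omega)) _ (hIcc _ (by omega))
      _ ≤ f 1 ^ ((((k + 1) / 2 : ℕ) : ℝ) / 2 ^ n) * f 1 ^ (((k / 2 : ℕ) : ℝ) / 2 ^ n) :=
          mul_le_mul (ih _ (by omega)) (ih _ (by omega)) (hf _) (Real.rpow_nonneg (hf 1) _)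
      _ = _ := by
          rw [← Real.rpow_add_of_nonneg (hf 1) (by positivity) (by positivity),
            ← Real.rpow_mul_natCast (hf 1)]
          norm_num

theorem le_rpow_of_sq_midpoint_le {f : ℝ → ℝ} (hf : 0 ≤ f) (h0 : f 0 ≤ 1)
    (hmid : ∀ s ∈ Icc (0 : ℝ) 1, ∀ t ∈ Icc (0 : ℝ) 1, f ((s + t) / 2) ^ 2 ≤ f s * f t)
    (hcont : ContinuousOn f (Ioc 0 1)) {s : ℝ} (hs : s ∈ Icc (0 : ℝ) 1) : f s ≤ f 1 ^ s := by
  rcases hs.1.eq_or_lt with rfl | hs0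
  · simpa using h0
  -- Dyadic approximation from above keeps the exponents in `(0, 1]`, where `f` is continuous.
  set k : ℕ → ℕ := fun n => ⌈s * 2 ^ n⌉₊
  have hk (n : ℕ) : k n ≤ 2 ^ n :=
    Nat.ceil_le.mpr (by simpa using mul_le_of_le_one_left (pow_nonneg zero_le_two n) hs.2)
  have hsk (n : ℕ) : s ≤ k n / 2 ^ n := (le_div_iff₀ (by positivity)).mpr (Nat.le_ceil _)
  have hks (n : ℕ) : (k n : ℝ) / 2 ^ n ≤ s + (2 ^ n)⁻¹ := by
    rw [div_le_iff₀ (by positivity), add_mul, inv_mul_cancel₀ (by positivity)]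
    exact (Nat.ceil_lt_add_one (mul_nonneg hs0.le (by positivity))).le
  have hlim : Tendsto (fun n => (k n : ℝ) / 2 ^ n) atTop (𝓝 s) := by
    refine tendsto_of_tendsto_of_tendsto_of_le_of_le tendsto_const_nhds ?_ hsk hks
    simpa using (tendsto_const_nhds (x := s)).add
      (tendsto_inv_atTop_zero.comp (tendsto_pow_atTop_atTop_of_one_lt (one_lt_two (α := ℝ))))
  have hlim' : Tendsto (fun n => (k n : ℝ) / 2 ^ n) atTop (𝓝[Ioc 0 1] s) :=
    tendsto_nhdsWithin_iff.mpr ⟨hlim, Eventually.of_forall fun n =>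
      ⟨hs0.trans_le (hsk n), div_le_one_of_le₀ (by exact_mod_cast hk n) (by positivity)⟩⟩
  exact le_of_tendsto_of_tendsto' ((hcont s ⟨hs0, hs.2⟩).tendsto.comp hlim')
    ((Real.continuousAt_const_rpow' hs0.ne').tendsto.comp hlim)
    fun n => apply_dyadic_le_rpow_of_sq_midpoint_le hf h0 hmid n (k n) (hk n)

theorem spectralRadius_mul_comm {𝕜 A : Type*} [NormedField 𝕜] [Ring A] [Algebra 𝕜 A] (a b : A) :
    spectralRadius 𝕜 (a * b) = spectralRadius 𝕜 (b * a) := by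
  have key : ∀ x y : A, spectralRadius 𝕜 (x * y) ≤ spectralRadius 𝕜 (y * x) := by
    refine fun x y => iSup₂_le fun k hk => ?_
    rcases eq_or_ne k 0 with rfl | hk0
    · simp
    · have : k ∈ spectrum 𝕜 (y * x) \ {0} := spectrum.nonzero_mul_comm (𝕜 := 𝕜) x y ▸ ⟨hk, hk0⟩
      exact le_iSup₂ (f := fun k (_ : k ∈ spectrum 𝕜 (y * x)) => (‖k‖₊ : ℝ≥0∞)) k this.1
  exact (key a b).antisymm (key b a)

theorem norm_mul_comm_of_isSelfAdjoint {A : Type*} [NonUnitalNormedRing A] [StarRing A]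
    [NormedStarGroup A] {a b : A} (ha : IsSelfAdjoint a) (hb : IsSelfAdjoint b) :
    ‖a * b‖ = ‖b * a‖ := by
  rw [← norm_star, star_mul, ha.star_eq, hb.star_eq]

section CStarAlgebra

variable {A : Type*} [CStarAlgebra A]

theorem spectralRadius_toReal_le_norm (x : A) : (spectralRadius ℂ x).toReal ≤ ‖x‖ := by
  nontriviality A
  refine ENNReal.toReal_le_of_le_ofReal (norm_nonneg x) ?_
  rw [ofReal_norm, enorm_eq_nnnorm]
  exact spectrum.spectralRadius_le_nnnorm x

theorem cfc_rpow_zero {a : A} (ha : IsSelfAdjoint a) : cfc (fun x : ℝ => x ^ (0 : ℝ)) a = 1 := by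
  simpa using cfc_const_one ℝ a ha

theorem cfc_rpow_one {a : A} (ha : IsSelfAdjoint a) : cfc (fun x : ℝ => x ^ (1 : ℝ)) a = a := by
  simpa using cfc_id' ℝ a ha

theorem continuousOn_cfc_rpow (a : A) :
    ContinuousOn (fun s : ℝ => cfc (fun x : ℝ => x ^ s) a) (Ioi 0) := by
  intro s₀ hs₀
  have hcont : ContinuousOn (fun p : ℝ × ℝ => p.2 ^ p.1) (Ioi 0 ×ˢ spectrum ℝ a) :=
    continuous_snd.continuousOn.rpow continuous_fst.continuousOn fun p hp => Or.inr hp.1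
  refine continuousWithinAt_cfc_fun ?_ ?_
  · rw [Metric.tendstoUniformlyOn_iff]
    intro ε hε
    obtain ⟨v, hv, hvε⟩ := (spectrum.isCompact a).mem_uniformity_of_prod
      (f := fun s x : ℝ => x ^ s) hcont hs₀ (Metric.dist_mem_uniformity hε)
    filter_upwards [hv] with s hs x hx
    rw [dist_comm]
    exact hvε s hs x hx
  · filter_upwards [self_mem_nhdsWithin] with s (hs : 0 < s)
    exact (continuous_id.rpow_const fun _ => Or.inr hs.le).continuousOn

variable [PartialOrder A] [StarOrderedRing A]

theorem cfc_rpow_mul_cfc_rpow {a : A} (ha : 0 ≤ a) {s t : ℝ} (hs : 0 ≤ s) (ht : 0 ≤ t) :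
    cfc (fun x : ℝ => x ^ s) a * cfc (fun x : ℝ => x ^ t) a =
      cfc (fun x : ℝ => x ^ (s + t)) a := by
  rw [← cfc_mul _ _ a (by fun_prop (disch := exact Or.inr hs))
    (by fun_prop (disch := exact Or.inr ht))]
  exact cfc_congr fun x hx =>
    (Real.rpow_add_of_nonneg (spectrum_nonneg_of_nonneg ha hx) hs ht).symm

theorem norm_cfc_rpow_mul_cfc_rpow_midpoint_sq_le {a b : A} (ha : 0 ≤ a) (hb : 0 ≤ b) {s t : ℝ}
    (hs : 0 ≤ s) (ht : 0 ≤ t) :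
    ‖cfc (fun x : ℝ => x ^ ((s + t) / 2)) a * cfc (fun x : ℝ => x ^ ((s + t) / 2)) b‖ ^ 2
      ≤ ‖cfc (fun x : ℝ => x ^ s) a * cfc (fun x : ℝ => x ^ s) b‖
        * ‖cfc (fun x : ℝ => x ^ t) a * cfc (fun x : ℝ => x ^ t) b‖ := by
  set m := (s + t) / 2
  have hm : 0 ≤ m := by positivity
  have hmm : m + m = s + t := add_halves _
  set P : ℝ → A → A := fun r c => cfc (fun x : ℝ => x ^ r) c
  have hP (r : ℝ) (c : A) : IsSelfAdjoint (P r c) := cfc_predicate _ c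
  have haa : P m a * P m a = P s a * P t a := by
    simp only [P, cfc_rpow_mul_cfc_rpow ha hm hm, cfc_rpow_mul_cfc_rpow ha hs ht, hmm]
  have hbb : P m b * P m b = P t b * P s b := by
    simp only [P, cfc_rpow_mul_cfc_rpow hb hm hm, cfc_rpow_mul_cfc_rpow hb ht hs, hmm, add_comm]
  have hstar : star (P m a * P m b) * (P m a * P m b) = P m b * (P s a * P t a) * P m b := by
    rw [star_mul, (hP m a).star_eq, (hP m b).star_eq, ← haa]
    noncomm_ring
  calc ‖P m a * P m b‖ ^ 2
      = (spectralRadius ℂ (star (P m a * P m b) * (P m a * P m b))).toReal :=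
        (CStarAlgebra.toReal_spectralRadius_star_mul_self_eq_norm_sq _).symm
    _ = (spectralRadius ℂ ((P t a * P t b) * (P s b * P s a))).toReal := by
        rw [hstar, spectralRadius_mul_comm, ← mul_assoc, hbb, ← mul_assoc, spectralRadius_mul_comm]
        simp only [mul_assoc]
    _ ≤ ‖P t a * P t b‖ * ‖P s b * P s a‖ :=
        (spectralRadius_toReal_le_norm _).trans (norm_mul_le _ _)
    _ = ‖P s a * P s b‖ * ‖P t a * P t b‖ := by
        rw [norm_mul_comm_of_isSelfAdjoint (hP s b) (hP s a), mul_comm]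

theorem norm_cfc_rpow_mul_cfc_rpow_le {a b : A} (ha : 0 ≤ a) (hb : 0 ≤ b) {s : ℝ}
    (hs : s ∈ Icc (0 : ℝ) 1) :
    ‖cfc (fun x : ℝ => x ^ s) a * cfc (fun x : ℝ => x ^ s) b‖ ≤ ‖a * b‖ ^ s := by
  have h0 : ‖cfc (fun x : ℝ => x ^ (0 : ℝ)) a * cfc (fun x : ℝ => x ^ (0 : ℝ)) b‖ ≤ 1 := by
    nontriviality A
    rw [cfc_rpow_zero ha.isSelfAdjoint, cfc_rpow_zero hb.isSelfAdjoint, one_mul, CStarRing.norm_one]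
  have hcont : ContinuousOn (fun r : ℝ => ‖cfc (fun x : ℝ => x ^ r) a * cfc (fun x : ℝ => x ^ r) b‖)
      (Ioc 0 1) :=
    ((continuousOn_cfc_rpow a).mul (continuousOn_cfc_rpow b)).norm.mono Ioc_subset_Ioi_self
  calc _ ≤ ‖cfc (fun x : ℝ => x ^ (1 : ℝ)) a * cfc (fun x : ℝ => x ^ (1 : ℝ)) b‖ ^ s :=
        le_rpow_of_sq_midpoint_le
          (f := fun r => ‖cfc (fun x : ℝ => x ^ r) a * cfc (fun x : ℝ => x ^ r) b‖)
          (fun _ => norm_nonneg _) h0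
          (fun s hs t ht => norm_cfc_rpow_mul_cfc_rpow_midpoint_sq_le ha hb hs.1 ht.1) hcont hs
    _ = ‖a * b‖ ^ s := by rw [cfc_rpow_one ha.isSelfAdjoint, cfc_rpow_one hb.isSelfAdjoint]

end CStarAlgebra

/-- Proposition 3.6 of the paper (the Cordes inequality): for positive bounded
self-adjoint operators `A`, `B` on a complex Hilbert space and `0 ≤ s ≤ 1`,
`‖A^s ∘ B^s‖ ≤ ‖A ∘ B‖^s`, where the fractional powers are defined via the
continuous functional calculus. -/
theorem stmt_15 {H : Type*} [NormedAddCommGroup H] [InnerProductSpace ℂ H] [CompleteSpace H]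
    (A B : H →L[ℂ] H) (hA : A.IsPositive) (hB : B.IsPositive)
    (s : ℝ) (hs0 : 0 ≤ s) (hs1 : s ≤ 1) :
    ‖cfc (fun t : ℝ => t ^ s) A ∘L cfc (fun t : ℝ => t ^ s) B‖ ≤ ‖A ∘L B‖ ^ s :=
  norm_cfc_rpow_mul_cfc_rpow_le (A.nonneg_iff_isPositive.mpr hA) (B.nonneg_iff_isPositive.mpr hB)
    ⟨hs0, hs1⟩
end
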